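/- arXiv:1401.4636 — 4 statements merged into one kernel-verified Lean document; each statement's English description precedes it below -/
import Mathlib

section
/- Let U : ℝ × ℝ → ℝ be twice continuously differentiable in its second argument with ∂U/∂Q < 0. Fix X and Q > 0, and define p(α) := U(X, Q-α) - α·(∂U/∂Q)(X, Q-α) for α ∈ [0, Q]. Then p(0) = U(X, Q), and if additionally ∂²U/∂Q² > 0, then p'(α) = α·(∂²U/∂Q²)(X, Q-α) - 2·(∂U/∂Q)(X, Q-α) > 0 for all α ∈ [0, Q], so p is strictly increasing on [0, Q]. -/
/-!
Differentiating `α ↦ U(X, Q - α) - α ∂_Q U(X, Q - α)` gives `α ∂²_Q U - 2 ∂_Q U`, both of whose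
terms are nonnegative on `[0, Q]` (the second strictly), so `p` is strictly increasing there.
-/

open Set

theorem hasDerivAt_comp_const_sub_sub_mul_deriv {f f' : ℝ → ℝ} {f'' c a : ℝ}
    (hf : HasDerivAt f (f' (c - a)) (c - a)) (hf' : HasDerivAt f' f'' (c - a)) :
    HasDerivAt (fun x => f (c - x) - x * f' (c - x)) (a * f'' - 2 * f' (c - a)) a := by
  have hf_comp : HasDerivAt (fun x => f (c - x)) (-f' (c - a)) a := by
    simpa using hf.comp_const_sub c a
  have hf'_comp : HasDerivAt (fun x => f' (c - x)) (-f'') a := by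
    simpa using hf'.comp_const_sub c a
  exact (hf_comp.sub ((hasDerivAt_id' a).mul hf'_comp)).congr_deriv (by ring)

theorem stmt_0_general (U U' U'' : ℝ → ℝ → ℝ)
    (hU' : ∀ x q, HasDerivAt (U x) (U' x q) q)
    (hU'' : ∀ x q, HasDerivAt (U' x) (U'' x q) q)
    (hUQneg : ∀ x q, U' x q < 0)
    (X Q : ℝ)
    (p : ℝ → ℝ) (hp : ∀ α, p α = U X (Q - α) - α * U' X (Q - α))
    (hUQQpos : ∀ x q, 0 < U'' x q) :
    p 0 = U X Q ∧
    (∀ α ∈ Icc (0:ℝ) Q,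
      HasDerivAt p (α * U'' X (Q - α) - 2 * U' X (Q - α)) α ∧
      0 < α * U'' X (Q - α) - 2 * U' X (Q - α)) ∧
    StrictMonoOn p (Icc (0:ℝ) Q) := by
  have hp_eq : p = fun α => U X (Q - α) - α * U' X (Q - α) := funext hp
  have hderiv (α : ℝ) : HasDerivAt p (α * U'' X (Q - α) - 2 * U' X (Q - α)) α :=
    hp_eq ▸ hasDerivAt_comp_const_sub_sub_mul_deriv (hU' X (Q - α)) (hU'' X (Q - α))
  have hpos : ∀ α ∈ Icc (0:ℝ) Q, 0 < α * U'' X (Q - α) - 2 * U' X (Q - α) := fun α hα => by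
    linarith [mul_nonneg hα.1 (hUQQpos X (Q - α)).le, hUQneg X (Q - α)]
  refine ⟨by simp [hp], fun α hα => ⟨hderiv α, hpos α hα⟩, ?_⟩
  exact strictMonoOn_of_hasDerivWithinAt_pos (convex_Icc 0 Q)
    (fun α _ => (hderiv α).continuousAt.continuousWithinAt)
    (fun α _ => (hderiv α).hasDerivWithinAt)
    (fun α hα => hpos α (interior_subset hα))

/-- Marginal price formula in the equilibrium LOB model:
`p α = U(X, Q-α) - α·∂_Q U(X, Q-α)` satisfies `p 0 = U(X,Q)` and, when
`∂_Q U < 0` and `∂²_Q U > 0`, `p' α = α·∂²_Q U(X,Q-α) - 2·∂_Q U(X,Q-α) > 0`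
on `[0,Q]`, so `p` is strictly increasing there. -/
theorem stmt_0 (U U' U'' : ℝ → ℝ → ℝ)
    (hU' : ∀ x q, HasDerivAt (U x) (U' x q) q)
    (hU'' : ∀ x q, HasDerivAt (U' x) (U'' x q) q)
    (hU''cont : ∀ x, Continuous (U'' x))
    (hUQneg : ∀ x q, U' x q < 0)
    (X Q : ℝ) (hQ : 0 < Q)
    (p : ℝ → ℝ) (hp : ∀ α, p α = U X (Q - α) - α * U' X (Q - α))
    (hUQQpos : ∀ x q, 0 < U'' x q) :
    p 0 = U X Q ∧
    (∀ α ∈ Icc (0:ℝ) Q,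
      HasDerivAt p (α * U'' X (Q - α) - 2 * U' X (Q - α)) α ∧
      0 < α * U'' X (Q - α) - 2 * U' X (Q - α)) ∧
    StrictMonoOn p (Icc (0:ℝ) Q) :=
  stmt_0_general U U' U'' hU' hU'' hUQneg X Q p hp hUQQpos
end

section
/- Let U : ℝ × ℝ → ℝ be continuously differentiable in its second argument, fix X and Q > 0, and define p(α) := U(X, Q-α) - α·(∂U/∂Q)(X, Q-α). Suppose p is continuously differentiable with p'(α) > 0 on [0, Q], and define the density μ along the curve by μ(p(α)) := 1/p'(α). Then for every α ∈ [0, Q]: (i) ∫_{p(0)}^{p(α)} μ(y) dy = α (change of variables y = p(u)); and (ii) ∫_{p(0)}^{p(α)} y μ(y) dy = α·U(X, Q-α). -/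
open Set intervalIntegral

/-!
Since `p' > 0`, the substitution `y = p u` turns `μ y dy` into `μ (p u) p' u du = du`: the
density `μ` is the push-forward of Lebesgue measure on `[0, Q]` under `p`. Hence the first
integral is `α` and the second is `∫₀^α p u du`. Finally `p` is the derivative of
`u ↦ u · U(X, Q - u)`, so the fundamental theorem of calculus gives `α · U(X, Q - α)`.
-/

theorem integral_mul_density_eq_integral_comp {f f' g : ℝ → ℝ} {a b : ℝ} (hab : a ≤ b)
    (hf : ∀ x ∈ Icc a b, HasDerivAt f (f' x) x) (hf' : ∀ x ∈ Icc a b, 0 < f' x)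
    (hg : ∀ x ∈ Icc a b, g (f x) = 1 / f' x) (φ : ℝ → ℝ) :
    ∫ y in f a..f b, φ y * g y = ∫ x in a..b, φ (f x) := by
  have hIoo : Ioo (min a b) (max a b) ⊆ Icc a b := by
    rw [min_eq_left hab, max_eq_right hab]
    exact Ioo_subset_Icc_self
  have hcont : ContinuousOn f (uIcc a b) := fun x hx =>
    (hf x (by rwa [uIcc_of_le hab] at hx)).continuousAt.continuousWithinAt
  rw [← integral_comp_mul_deriv_of_deriv_nonneg (g := fun y => φ y * g y) hcont
    (fun x hx => hf x (hIoo hx)) (fun x hx => (hf' x (hIoo hx)).le)]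
  refine integral_congr fun x hx => ?_
  rw [uIcc_of_le hab] at hx
  have hne := (hf' x hx).ne'
  simp only [Function.comp_apply, hg x hx]
  field_simp

theorem hasDerivAt_mul_comp_const_sub {V V' : ℝ → ℝ} (hV : ∀ q, HasDerivAt V (V' q) q)
    (Q x : ℝ) :
    HasDerivAt (fun u => u * V (Q - u)) (V (Q - x) - x * V' (Q - x)) x := by
  have hcomp : HasDerivAt (fun u => V (Q - u)) (V' (Q - x) * (-1)) x :=
    (hV (Q - x)).comp x ((hasDerivAt_id x).const_sub Q)
  refine ((hasDerivAt_id x).fun_mul hcomp).congr_deriv ?_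
  simp only [id_eq]
  ring

theorem stmt_1_general (U U' : ℝ → ℝ → ℝ)
    (hU' : ∀ x q, HasDerivAt (U x) (U' x q) q)
    (X Q : ℝ)
    (p p' : ℝ → ℝ)
    (hp : ∀ α, p α = U X (Q - α) - α * U' X (Q - α))
    (hpderiv : ∀ α, HasDerivAt p (p' α) α)
    (hp'pos : ∀ α ∈ Icc (0:ℝ) Q, 0 < p' α)
    (μ : ℝ → ℝ)
    (hμ : ∀ α ∈ Icc (0:ℝ) Q, μ (p α) = 1 / p' α) :
    ∀ α ∈ Icc (0:ℝ) Q,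
      (∫ y in (p 0)..(p α), μ y) = α ∧
      (∫ y in (p 0)..(p α), y * μ y) = α * U X (Q - α) := by
  intro a ⟨ha0, haQ⟩
  have hsub : Icc 0 a ⊆ Icc 0 Q := Icc_subset_Icc_right haQ
  have hsubst := integral_mul_density_eq_integral_comp ha0 (fun x _ => hpderiv x)
    (fun x hx => hp'pos x (hsub hx)) (fun x hx => hμ x (hsub hx))
  have hprim : ∀ x ∈ uIcc 0 a, HasDerivAt (fun u => u * U X (Q - u)) (p x) x := fun x _ =>
    hp x ▸ hasDerivAt_mul_comp_const_sub (hU' X) Q x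
  have hpcont : Continuous p := continuous_iff_continuousAt.2 fun x => (hpderiv x).continuousAt
  constructor
  · simpa using hsubst fun _ => 1
  · simpa using (hsubst id).trans
      (integral_eq_sub_of_hasDerivAt hprim (hpcont.intervalIntegrable 0 a))

/-- The equilibrium density `μ` of the LOB, defined along the price curve by
`μ (p α) = 1 / p' α`, satisfies the equilibrium conditions:
`∫_{p 0}^{p α} μ(y) dy = α` and `∫_{p 0}^{p α} y μ(y) dy = α · U(X, Q-α)`. -/
theorem stmt_1 (U U' : ℝ → ℝ → ℝ)
    (hU' : ∀ x q, HasDerivAt (U x) (U' x q) q)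
    (hU'cont : ∀ x, Continuous (U' x))
    (X Q : ℝ) (hQ : 0 < Q)
    (p p' : ℝ → ℝ)
    (hp : ∀ α, p α = U X (Q - α) - α * U' X (Q - α))
    (hpderiv : ∀ α, HasDerivAt p (p' α) α)
    (hp'cont : Continuous p')
    (hp'pos : ∀ α ∈ Icc (0:ℝ) Q, 0 < p' α)
    (μ : ℝ → ℝ)
    (hμ : ∀ α ∈ Icc (0:ℝ) Q, μ (p α) = 1 / p' α) :
    ∀ α ∈ Icc (0:ℝ) Q,
      (∫ y in (p 0)..(p α), μ y) = α ∧
      (∫ y in (p 0)..(p α), y * μ y) = α * U X (Q - α) :=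
  stmt_1_general U U' hU' X Q p p' hp hpderiv hp'pos μ hμ
end

section
/- Let g : ℝ × [0, K] → ℝ satisfy: g(x, 0) = 0, g(x, ·) is convex and increasing, and g(x, y) ≥ U(x, 0)·y for all y ∈ [0, K], where U(x, ·) is nonincreasing. Then for all x, all Q ≥ 0, all y ∈ (0, K], and all y' with 0 < y' ≤ min(y, Q): y'·U(x, Q - y') + g(x, y - y') ≤ g(x, y). -/
open Set

/- Convexity together with `g x 0 = 0` makes the chord from `0` lie above the graph, so removing
`y'` of the `y` shares lowers the penalty by at least `y' · g(x, y) / y ≥ U(x, 0) · y'`; and since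
`U x` is antitone, `U(x, Q - y') ≤ U(x, 0)`. -/

theorem ConvexOn.map_smul_le_of_map_zero {𝕜 E β : Type*} [Field 𝕜] [LinearOrder 𝕜]
    [IsStrictOrderedRing 𝕜] [AddCommGroup E] [AddCommMonoid β] [PartialOrder β] [Module 𝕜 E]
    [Module 𝕜 β] {s : Set E} {f : E → β} (hf : ConvexOn 𝕜 s f) (h0 : 0 ∈ s) {x : E} (hx : x ∈ s)
    (hf0 : f 0 = 0) {θ : 𝕜} (hθ0 : 0 ≤ θ) (hθ1 : θ ≤ 1) : f (θ • x) ≤ θ • f x := by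
  simpa [hf0] using hf.2 h0 hx (sub_nonneg.2 hθ1) hθ0 (sub_add_cancel 1 θ)

theorem ConvexOn.mul_add_map_sub_le {s : Set ℝ} {f : ℝ → ℝ} (hf : ConvexOn ℝ s f) (h0 : 0 ∈ s)
    {y : ℝ} (hy : y ∈ s) (hf0 : f 0 = 0) {c : ℝ} (hc : c * y ≤ f y) {t : ℝ} (ht : 0 ≤ t)
    (hty : t ≤ y) : c * t + f (y - t) ≤ f y := by
  rcases (ht.trans hty).eq_or_lt with rfl | hy0
  · obtain rfl : t = 0 := le_antisymm hty ht
    simp [hf0]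
  have hchord : f (y - t) ≤ (y - t) / y * f y := by
    have := hf.map_smul_le_of_map_zero h0 hy hf0 (div_nonneg (sub_nonneg.2 hty) hy0.le)
      ((div_le_one hy0).2 (sub_le_self y ht))
    rwa [smul_eq_mul, div_mul_cancel₀ _ hy0.ne'] at this
  have hslope : c * t ≤ t / y * f y := by
    calc c * t = t / y * (c * y) := by field_simp
      _ ≤ t / y * f y := by gcongr
  calc c * t + f (y - t) ≤ t / y * f y + (y - t) / y * f y := add_le_add hslope hchord
    _ = f y := by field_simp; ring

theorem stmt_4_general (K : ℝ) (U g : ℝ → ℝ → ℝ)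
    (hg0 : ∀ x, g x 0 = 0)
    (hgconv : ∀ x, ConvexOn ℝ (Icc (0:ℝ) K) (g x))
    (hglin : ∀ x, ∀ y ∈ Icc (0:ℝ) K, U x 0 * y ≤ g x y)
    (hUanti : ∀ x, Antitone (U x)) :
    ∀ (x Q : ℝ), 0 ≤ Q → ∀ y ∈ Ioc (0:ℝ) K, ∀ y' : ℝ, 0 < y' → y' ≤ min y Q →
      y' * U x (Q - y') + g x (y - y') ≤ g x y := by
  intro x Q _ y ⟨hy0, hyK⟩ y' hy' hy'min
  obtain ⟨hy'y, hy'Q⟩ := le_min_iff.1 hy'min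
  have hymem : y ∈ Icc 0 K := ⟨hy0.le, hyK⟩
  have hU : U x (Q - y') ≤ U x 0 := hUanti x (sub_nonneg.2 hy'Q)
  calc y' * U x (Q - y') + g x (y - y') ≤ U x 0 * y' + g x (y - y') := by
        rw [mul_comm]; gcongr
    _ ≤ g x y := (hgconv x).mul_add_map_sub_le ⟨le_rfl, hy0.le.trans hyK⟩ hymem (hg0 x)
        (hglin x y hymem) hy'.le hy'y

/-- It is never advantageous to pay the full terminal penalty: buying `y'` shares from
the LOB at cost `y'·U(x,Q-y')` and paying the penalty `g(x, y-y')` on the rest never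
costs more than the full penalty `g(x,y)`. -/
theorem stmt_4 (K : ℝ) (hK : 0 < K) (U g : ℝ → ℝ → ℝ)
    (hg0 : ∀ x, g x 0 = 0)
    (hgconv : ∀ x, ConvexOn ℝ (Icc (0:ℝ) K) (g x))
    (hgmono : ∀ x, MonotoneOn (g x) (Icc (0:ℝ) K))
    (hglin : ∀ x, ∀ y ∈ Icc (0:ℝ) K, U x 0 * y ≤ g x y)
    (hUanti : ∀ x, Antitone (U x)) :
    ∀ (x Q : ℝ), 0 ≤ Q → ∀ y ∈ Ioc (0:ℝ) K, ∀ y' : ℝ, 0 < y' → y' ≤ min y Q →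
      y' * U x (Q - y') + g x (y - y') ≤ g x y :=
  stmt_4_general K U g hg0 hgconv hglin hUanti
end

section
/- Let 𝒢 be a probability space filtration setup with F_s = Ĝ_s ∨ σ(Y_r : t ≤ r ≤ s), where Ĝ_s := F^W_s ∨ F^Y_{s∧t}, for a fixed t. Let τ₁ᵗ be the first jump time of Y after t. Then for any s ≥ t and any F_s-measurable random variable X, there exists an Ĝ_s-measurable random variable X̃ such that X·1_{τ₁ᵗ > s} = X̃·1_{τ₁ᵗ > s} almost surely. -/
open Set MeasureTheory

/-!
By Doob–Dynkin, an `F_s`-measurable `X` is `φ (ω, (Y r ω)_{r ∈ [t,s]})` with `φ` measurable for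
`Ĝ_s ⊗ pi`. On `{τ₁ᵗ > s}` the path `(Y r)_{r ∈ [t,s]}` is the constant path `Y t`, which is
`Ĝ_s`-measurable, so `X̃ ω := φ (ω, fun _ ↦ Y t ω)` does the job, even pointwise.
-/

lemma MeasurableSpace.comap_pi_eq_iSup_comap {Ω ι : Type*} {β : ι → Type*}
    [mβ : ∀ i, MeasurableSpace (β i)] (Y : ∀ i, Ω → β i) :
    MeasurableSpace.pi.comap (fun ω i ↦ Y i ω) = ⨆ i, (mβ i).comap (Y i) := by
  simp only [MeasurableSpace.pi, MeasurableSpace.comap_iSup, MeasurableSpace.comap_comp]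
  rfl

theorem Measurable.exists_eqOn_of_sup_iSup_comap {Ω ι γ : Type*} {β : ι → Type*}
    [mβ : ∀ i, MeasurableSpace (β i)] [MeasurableSpace γ] [StandardBorelSpace γ] [Nonempty γ]
    {G : MeasurableSpace Ω} {Y Z : ∀ i, Ω → β i} (hZ : ∀ i, Measurable[G] (Z i))
    {E : Set Ω} (hYZ : ∀ ω ∈ E, ∀ i, Y i ω = Z i ω)
    {X : Ω → γ} (hX : Measurable[G ⊔ ⨆ i, (mβ i).comap (Y i)] X) :
    ∃ X' : Ω → γ, Measurable[G] X' ∧ EqOn X X' E := by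
  have hcomap : (G.prod MeasurableSpace.pi).comap (fun ω ↦ (ω, fun i ↦ Y i ω))
      = G ⊔ ⨆ i, (mβ i).comap (Y i) := by
    rw [← MeasurableSpace.comap_pi_eq_iSup_comap]
    simpa only [MeasurableSpace.comap_id, id_eq] using
      MeasurableSpace.comap_prodMk (mβ := G) id fun ω i ↦ Y i ω
  obtain ⟨φ, hφ, rfl⟩ := Measurable.exists_eq_measurable_comp
    (mY := G.prod MeasurableSpace.pi) (hcomap ▸ hX)
  refine ⟨φ ∘ fun ω ↦ (ω, fun i ↦ Z i ω),
    hφ.comp (measurable_id.prodMk (measurable_pi_lambda _ hZ)), fun ω hω ↦ ?_⟩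
  simp only [Function.comp_apply, hYZ ω hω]

theorem stmt_13_general {Ω : Type*} [mΩ : MeasurableSpace Ω] (μ : Measure Ω)
    (G : MeasurableSpace Ω)
    (Y : ℝ → Ω → ℝ) (t s : ℝ)
    (τ1 : Ω → ℝ)
    (hYt : Measurable[G] (Y t))
    (hfreeze : ∀ ω, s < τ1 ω → ∀ r ∈ Icc t s, Y r ω = Y t ω)
    (F : MeasurableSpace Ω)
    (hF : F = G ⊔ ⨆ r ∈ Icc t s, MeasurableSpace.comap (Y r) inferInstance)
    (X : Ω → ℝ) (hX : Measurable[F] X) :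
    ∃ X' : Ω → ℝ, Measurable[G] X' ∧ ∀ᵐ ω ∂μ, s < τ1 ω → X ω = X' ω := by
  rw [hF, iSup_subtype'] at hX
  obtain ⟨X', hX', hXX'⟩ := hX.exists_eqOn_of_sup_iSup_comap
    (Y := fun r : Icc t s ↦ Y r) (Z := fun _ ↦ Y t) (E := {ω | s < τ1 ω})
    (fun _ ↦ hYt) fun ω hω r ↦ hfreeze ω hω r r.2
  exact ⟨X', hX', .of_forall fun ω hω ↦ hXX' hω⟩

/-- Lemma 6.1 of the paper: with `Ĝ_s = F^W_s ∨ F^Y_{s∧t}` and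
`F_s = Ĝ_s ∨ σ(Y_r : t ≤ r ≤ s)`, on the event `{τ₁ᵗ > s}` (no jump of `Y` in `(t,s]`,
so that `Y` is frozen at its time-`t` value on `[t,s]`), every `F_s`-measurable random
variable coincides a.s. with a `Ĝ_s`-measurable one. -/
theorem stmt_13 {Ω : Type*} [mΩ : MeasurableSpace Ω] (μ : Measure Ω) [IsProbabilityMeasure μ]
    (G : MeasurableSpace Ω) (hG : G ≤ mΩ)
    (Y : ℝ → Ω → ℝ) (t s : ℝ) (hts : t ≤ s)
    (τ1 : Ω → ℝ)
    (hτ1 : ∀ ω, t < τ1 ω)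
    (hYt : Measurable[G] (Y t))
    (hfreeze : ∀ ω, s < τ1 ω → ∀ r ∈ Icc t s, Y r ω = Y t ω)
    (F : MeasurableSpace Ω)
    (hF : F = G ⊔ ⨆ r ∈ Icc t s, MeasurableSpace.comap (Y r) inferInstance)
    (X : Ω → ℝ) (hX : Measurable[F] X) :
    ∃ X' : Ω → ℝ, Measurable[G] X' ∧ ∀ᵐ ω ∂μ, s < τ1 ω → X ω = X' ω :=
  stmt_13_general (mΩ := mΩ) μ G Y t s τ1 hYt hfreeze F hF X hX
end
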